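/- arXiv:1503.06718 — 7 statements merged into one kernel-verified Lean document; each statement's English description precedes it below -/
import Mathlib

section
/- The set X_d = { e(k) - e(i) - e(j) : (i,j,k) ∈ {1,...,d}^3 such that d divides k - i - j }, where e(i) denotes the i-th standard basis vector of ℤ^d, has cardinality d(d-1)/2 + 1. -/
/-- The `i`-th standard basis vector of `ℤ^d`. -/
def stdBasis (d : ℕ) (i : Fin d) : Fin d → ℤ := fun j => if j = i then 1 else 0

/-- The set `X_d = { e(k) - e(i) - e(j) : i,j,k ∈ {1,…,d}, d ∣ k - i - j }`
(indices written 1-based; here `Fin d` values represent `i+1` etc.). -/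
def Xset (d : ℕ) : Set (Fin d → ℤ) :=
  { x | ∃ i j k : Fin d,
      (d : ℤ) ∣ (((k : ℕ) : ℤ) - ((i : ℕ) : ℤ) - ((j : ℕ) : ℤ) - 1) ∧
      x = stdBasis d k - stdBasis d i - stdBasis d j }

/-- Membership in `Λ_d = ℤ_{≥0}^d`. -/
def nonneg {d : ℕ} (v : Fin d → ℤ) : Prop := ∀ i, 0 ≤ v i

/-- The covering relation `v ⋖ w` on `Λ_d`: `v = w + x` for some `x ∈ X_d`. -/
def covRel (d : ℕ) (v w : Fin d → ℤ) : Prop :=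
  nonneg v ∧ nonneg w ∧ ∃ x ∈ Xset d, v = w + x

/-- The order `≺` on `Λ_d`: transitive closure of the covering relation. -/
def precR (d : ℕ) : (Fin d → ℤ) → (Fin d → ℤ) → Prop :=
  Relation.TransGen (covRel d)

/-- The principal ideal `I(v) = {v} ∪ {w : w ≺ v}`. -/
def idealG (d : ℕ) (v : Fin d → ℤ) : Set (Fin d → ℤ) := {v} ∪ { w | precR d w v }

/-- `n·e(1)` in `ℤ^d`. -/
def nE1 (d n : ℕ) : Fin d → ℤ := fun j => if (j : ℕ) = 0 then (n : ℤ) else 0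

/-- `C_n^{(d)} = |I(n·e(1))|`. -/
noncomputable def Cnum (d n : ℕ) : ℕ := (idealG d (nE1 d n)).ncard

/-- The congruence class `Λ_{d,k}` (with `k ∈ Fin d` representing `k+1 ∈ {1,…,d}`). -/
def Lclass (d : ℕ) (k : Fin d) : Set (Fin d → ℤ) :=
  { v | nonneg v ∧ (d : ℤ) ∣ ((∑ i : Fin d, ((i.val : ℤ) + 1) * v i) - (((k : ℕ) : ℤ) + 1)) }

/-!
With `d = n + 1` and 0-based indices in `Fin d`, the condition `d ∣ k - i - j - 1` says
`k = i + j + 1`, so every element of `X_d` is `x(i, j) = e(i + j + 1) - e(i) - e(j)`, and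
`x(i, j) = x(j, i)`. Since `last + 1 = 0`, every pair containing `last` gives `-e(last)`. For
`i, j ≠ last` the index `i + j + 1` differs from `i` and `j`, so the negative entries of `x(i, j)`
sit exactly at `i` and `j`: these vectors are distinct for distinct unordered pairs
`{i, j} ⊆ {0, …, n - 1}` and differ from `-e(last)`. Hence `|X_d| = |Sym2 (Fin n)| + 1`.
-/

namespace Xset

lemma stdBasis_sub_sub_neg_iff {d : ℕ} {i j k : Fin d} (hki : k ≠ i) (hkj : k ≠ j) (t : Fin d) :
    (stdBasis d k - stdBasis d i - stdBasis d j) t < 0 ↔ t = i ∨ t = j := by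
  simp only [Pi.sub_apply, stdBasis]
  split_ifs <;> subst_vars <;> simp_all

variable {n : ℕ}

lemma natCast_dvd_iff_eq_add (i j k : Fin (n + 1)) :
    ((n + 1 : ℕ) : ℤ) ∣ ((k : ℕ) : ℤ) - ((i : ℕ) : ℤ) - ((j : ℕ) : ℤ) - 1 ↔ k = i + j + 1 := by
  have hk : ((k : ℕ) : ℤ) % ((n + 1 : ℕ) : ℤ) = k := Int.emod_eq_of_lt (by positivity) (by omega)
  rw [show ((k : ℕ) : ℤ) - i - j - 1 = -((i + j + 1 : ℤ) - k) by ring, dvd_neg,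
    ← Int.modEq_iff_dvd, Int.ModEq, hk, Fin.ext_iff, ← Int.natCast_inj]
  push_cast [Fin.val_add, Fin.val_one']
  simp only [Int.emod_add_emod, Int.add_emod_emod]

lemma add_add_one_eq_left_iff (i j : Fin (n + 1)) : i + j + 1 = i ↔ j = Fin.last n := by
  rw [add_assoc, add_eq_left, ← Fin.last_add_one n, add_left_inj]

def vec (i j : Fin (n + 1)) : Fin (n + 1) → ℤ :=
  stdBasis (n + 1) (i + j + 1) - stdBasis (n + 1) i - stdBasis (n + 1) j

lemma vec_comm (i j : Fin (n + 1)) : vec i j = vec j i := by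
  rw [vec, vec, add_comm i j, sub_right_comm]

lemma vec_last (i : Fin (n + 1)) : vec i (Fin.last n) = -stdBasis (n + 1) (Fin.last n) := by
  rw [vec, (add_add_one_eq_left_iff i _).mpr rfl, sub_self, zero_sub]

lemma mem_iff_exists_vec (x : Fin (n + 1) → ℤ) : x ∈ Xset (n + 1) ↔ ∃ i j, vec i j = x := by
  simp only [Xset, Set.mem_ofPred_eq, natCast_dvd_iff_eq_add, vec]
  constructor
  · rintro ⟨i, j, _, rfl, rfl⟩
    exact ⟨i, j, rfl⟩
  · rintro ⟨i, j, rfl⟩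
    exact ⟨i, j, _, rfl, rfl⟩

lemma vec_castSucc_neg_iff (i j t : Fin n) :
    vec i.castSucc j.castSucc t.castSucc < 0 ↔ t = i ∨ t = j := by
  have hne (a b : Fin n) : a.castSucc + b.castSucc + 1 ≠ a.castSucc := by
    rw [Ne, add_add_one_eq_left_iff]
    exact Fin.castSucc_ne_last b
  rw [vec, stdBasis_sub_sub_neg_iff (hne i j) (add_comm i.castSucc _ ▸ hne j i),
    Fin.castSucc_inj, Fin.castSucc_inj]

def symVec : Sym2 (Fin n) → Fin (n + 1) → ℤ :=
  Sym2.lift ⟨fun i j => vec i.castSucc j.castSucc, fun _ _ => vec_comm _ _⟩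

lemma symVec_castSucc_neg_iff (z : Sym2 (Fin n)) (t : Fin n) :
    symVec z t.castSucc < 0 ↔ t ∈ z := by
  induction z using Sym2.ind with
  | h i j => simp only [symVec, Sym2.lift_mk, vec_castSucc_neg_iff, Sym2.mem_iff]

lemma symVec_injective : Function.Injective (symVec (n := n)) := fun _ _ h =>
  Sym2.ext fun t => by rw [← symVec_castSucc_neg_iff, h, symVec_castSucc_neg_iff]

lemma neg_stdBasis_last_notMem_range_symVec :
    -stdBasis (n + 1) (Fin.last n) ∉ Set.range symVec := by
  rintro ⟨z, hz⟩
  induction z using Sym2.ind with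
  | h i j =>
    have hneg := (symVec_castSucc_neg_iff s(i, j) i).mpr (Sym2.mem_mk_left i j)
    simp [hz, stdBasis, Fin.castSucc_ne_last] at hneg

lemma eq_insert_range_symVec :
    Xset (n + 1) = insert (-stdBasis (n + 1) (Fin.last n)) (Set.range symVec) := by
  ext x
  rw [mem_iff_exists_vec, Set.mem_insert_iff, Set.mem_range]
  constructor
  · rintro ⟨i, j, rfl⟩
    induction i using Fin.lastCases with
    | last => exact .inl (by rw [vec_comm, vec_last])
    | cast i =>
      induction j using Fin.lastCases with
      | last => exact .inl (vec_last _)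
      | cast j => exact .inr ⟨s(i, j), rfl⟩
  · rintro (rfl | ⟨z, rfl⟩)
    · exact ⟨_, _, vec_last (Fin.last n)⟩
    · induction z using Sym2.ind with
      | h i j => exact ⟨i.castSucc, j.castSucc, rfl⟩

end Xset

theorem stmt0 (d : ℕ) (hd : 1 ≤ d) :
    (Xset d).ncard = d * (d - 1) / 2 + 1 := by
  obtain ⟨n, rfl⟩ := Nat.exists_eq_add_of_le' hd
  rw [Xset.eq_insert_range_symVec, Set.ncard_insert_of_notMem
    Xset.neg_stdBasis_last_notMem_range_symVec, Set.ncard_range_of_injective Xset.symVec_injective,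
    Nat.card_eq_fintype_card, Sym2.card, Fintype.card_fin, Nat.choose_two_right,
    Nat.add_sub_cancel, Nat.mul_comm]
end

section
/- For every v ∈ Λ_{d,k} of height (coordinate sum) at least 2, there exists x ∈ X_d such that v + x ∈ ℤ_{≥0}^d; consequently, by induction, e(k) ≺ v (respectively 0 ≺ v when k = d) for all such v, i.e., each poset Λ_{d,k} is connected with minimum element e(k) for k ≠ d and minimum element 0 for k = d. -/
/-!
A nonnegative vector of height at least 2 dominates `e(i) + e(j)` for some `i, j`, and choosing
`k ≡ i + j + 1 (mod d)` gives a move `x = e(k) - e(i) - e(j) ∈ X_d` that keeps `v + x` nonnegative.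
Such a move lowers the height by one and preserves the class `∑ (m + 1) v_m (mod d)`, so descending
from `v` we reach a vector of height 1 in `Λ_{d,k}`, which can only be `e(k)`. When `k = d` one more
move `e(d) - e(d) - e(d)` leads from `e(d)` to `0`.
-/

open Finset Relation

section

variable {d : ℕ}

lemma sum_mul_stdBasis (f : Fin d → ℤ) (t : Fin d) : ∑ m, f m * stdBasis d t m = f t := by
  simp [stdBasis]

lemma sum_stdBasis (t : Fin d) : ∑ m, stdBasis d t m = 1 := by
  simp [stdBasis]

lemma stdBasis_nonneg (t : Fin d) : nonneg (stdBasis d t) := by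
  intro m
  unfold stdBasis
  split <;> norm_num

lemma sum_mul_add_move (f v : Fin d → ℤ) (i j k : Fin d) :
    ∑ m, f m * (v + (stdBasis d k - stdBasis d i - stdBasis d j)) m
      = ∑ m, f m * v m + (f k - f i - f j) := by
  simp only [Pi.add_apply, Pi.sub_apply, mul_add, mul_sub, sum_add_distrib, sum_sub_distrib,
    sum_mul_stdBasis]

lemma sum_add_move (v : Fin d → ℤ) (i j k : Fin d) :
    ∑ m, (v + (stdBasis d k - stdBasis d i - stdBasis d j)) m = ∑ m, v m - 1 := by
  simpa [sub_eq_add_neg] using sum_mul_add_move (fun _ => 1) v i j k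

lemma eq_zero_of_sum_eq_zero {v : Fin d → ℤ} (hv : nonneg v) (h0 : ∑ m, v m = 0) : v = 0 :=
  funext fun m => (sum_eq_zero_iff_of_nonneg fun i _ => hv i).mp h0 m (mem_univ m)

lemma exists_nonneg_sub_stdBasis {v : Fin d → ℤ} (hv : nonneg v) (h1 : 1 ≤ ∑ m, v m) :
    ∃ i, nonneg (v - stdBasis d i) := by
  obtain ⟨i, -, hi⟩ : ∃ i ∈ univ, 0 < v i := by
    by_contra! h
    linarith [sum_nonpos h]
  refine ⟨i, fun m => ?_⟩
  have := hv m
  simp only [Pi.sub_apply, stdBasis]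
  split_ifs with hm
  · subst hm; omega
  · omega

lemma sum_sub_stdBasis (v : Fin d → ℤ) (i : Fin d) :
    ∑ m, (v - stdBasis d i) m = ∑ m, v m - 1 := by
  simp only [Pi.sub_apply, sum_sub_distrib, sum_stdBasis]

lemma exists_eq_stdBasis_of_sum_eq_one {v : Fin d → ℤ} (hv : nonneg v) (h1 : ∑ m, v m = 1) :
    ∃ i, v = stdBasis d i := by
  obtain ⟨i, hi⟩ := exists_nonneg_sub_stdBasis hv h1.ge
  refine ⟨i, sub_eq_zero.mp (eq_zero_of_sum_eq_zero hi ?_)⟩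
  rw [sum_sub_stdBasis, h1, sub_self]

lemma exists_mem_Xset (i j : Fin d) : ∃ k, stdBasis d k - stdBasis d i - stdBasis d j ∈ Xset d := by
  set a := i.val + j.val + 1
  refine ⟨⟨a % d, Nat.mod_lt _ i.pos⟩, i, j, _, ?_, rfl⟩
  have hdvd : (d : ℤ) ∣ (a : ℤ) % d - a := (Int.mod_modEq (a : ℤ) d).symm.dvd
  convert hdvd using 1
  push_cast [a]
  ring

lemma exists_move_of_two_le_sum {v : Fin d → ℤ} (hv : nonneg v) (h2 : 2 ≤ ∑ m, v m) :
    ∃ x ∈ Xset d, nonneg (v + x) ∧ ∑ m, (v + x) m = ∑ m, v m - 1 := by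
  obtain ⟨i, hi⟩ := exists_nonneg_sub_stdBasis hv (by linarith)
  obtain ⟨j, hj⟩ := exists_nonneg_sub_stdBasis hi (by rw [sum_sub_stdBasis]; linarith)
  obtain ⟨k, hx⟩ := exists_mem_Xset i j
  refine ⟨_, hx, fun m => ?_, sum_add_move v i j k⟩
  have := add_nonneg (hj m) (stdBasis_nonneg k m)
  simp only [Pi.add_apply, Pi.sub_apply] at this ⊢
  linarith

lemma add_mem_Lclass {k : Fin d} {v x : Fin d → ℤ} (hv : v ∈ Lclass d k) (hx : x ∈ Xset d)
    (hvx : nonneg (v + x)) : v + x ∈ Lclass d k := by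
  obtain ⟨i, j, k', hdvd, rfl⟩ := hx
  refine ⟨hvx, ?_⟩
  rw [sum_mul_add_move (fun m => (m.val : ℤ) + 1)]
  exact (dvd_add hv.2 hdvd).trans (dvd_of_eq (by ring))

lemma eq_of_stdBasis_mem_Lclass {i k : Fin d} (h : stdBasis d i ∈ Lclass d k) : i = k := by
  have hdvd := h.2
  rw [sum_mul_stdBasis (fun m => (m.val : ℤ) + 1), add_sub_add_right_eq_sub] at hdvd
  have hi := i.isLt
  have hk := k.isLt
  have := Int.eq_zero_of_abs_lt_dvd hdvd (abs_sub_lt_iff.mpr ⟨by omega, by omega⟩)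
  omega

lemma succ_eq_of_zero_mem_Lclass {k : Fin d} (h : (0 : Fin d → ℤ) ∈ Lclass d k) :
    (k : ℕ) + 1 = d := by
  have hdvd : (d : ℤ) ∣ (k : ℤ) + 1 := by
    simpa only [Pi.zero_apply, mul_zero, sum_const_zero, zero_sub, dvd_neg] using h.2
  have := Int.le_of_dvd (by omega) hdvd
  have := k.isLt
  omega

lemma reflTransGen_stdBasis_of_sum_eq_succ (k : Fin d) :
    ∀ n : ℕ, ∀ v ∈ Lclass d k, ∑ m, v m = n + 1 → ReflTransGen (covRel d) (stdBasis d k) v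
  | 0, v, hv, h1 => by
    obtain ⟨i, rfl⟩ := exists_eq_stdBasis_of_sum_eq_one hv.1 (by simpa using h1)
    rw [eq_of_stdBasis_mem_Lclass hv]
  | n + 1, v, hv, hn => by
    obtain ⟨x, hx, hvx, hsum⟩ := exists_move_of_two_le_sum hv.1 (by omega)
    refine (reflTransGen_stdBasis_of_sum_eq_succ k n (v + x) (add_mem_Lclass hv hx hvx)
      (by rw [hsum, hn]; push_cast; ring)).tail ⟨hvx, hv.1, x, hx, rfl⟩

lemma reflTransGen_stdBasis_of_mem_Lclass {k : Fin d} {v : Fin d → ℤ} (hv : v ∈ Lclass d k)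
    (hv0 : v ≠ 0) : ReflTransGen (covRel d) (stdBasis d k) v := by
  obtain ⟨n, hn⟩ : ∃ n : ℕ, ∑ m, v m = n + 1 := by
    have hpos : 0 < ∑ m, v m := lt_of_le_of_ne (sum_nonneg fun m _ => hv.1 m)
      fun h => hv0 (eq_zero_of_sum_eq_zero hv.1 h.symm)
    exact ⟨(∑ m, v m - 1).toNat, by omega⟩
  exact reflTransGen_stdBasis_of_sum_eq_succ k n v hv hn

lemma covRel_zero_stdBasis {k : Fin d} (hk : (k : ℕ) + 1 = d) : covRel d 0 (stdBasis d k) :=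
  ⟨fun _ => le_rfl, stdBasis_nonneg k, _, ⟨k, k, k, ⟨-1, by omega⟩, rfl⟩, by abel⟩

end

theorem stmt2_general (d : ℕ) (k : Fin d) :
    (∀ v ∈ Lclass d k, 2 ≤ ∑ i : Fin d, v i → ∃ x ∈ Xset d, nonneg (v + x)) ∧
    ((k : ℕ) + 1 ≠ d →
      ∀ v ∈ Lclass d k, v ≠ stdBasis d k → precR d (stdBasis d k) v) ∧
    ((k : ℕ) + 1 = d →
      ∀ v ∈ Lclass d k, v ≠ 0 → precR d 0 v) := by
  refine ⟨fun v hv h2 => ?_, fun hk v hv hne => ?_, fun hk v hv hv0 => ?_⟩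
  · obtain ⟨x, hx, hvx, -⟩ := exists_move_of_two_le_sum hv.1 h2
    exact ⟨x, hx, hvx⟩
  · have hv0 : v ≠ 0 := by
      rintro rfl
      exact hk (succ_eq_of_zero_mem_Lclass hv)
    exact (reflTransGen_iff_eq_or_transGen.mp
      (reflTransGen_stdBasis_of_mem_Lclass hv hv0)).resolve_left hne
  · exact TransGen.head' (covRel_zero_stdBasis hk) (reflTransGen_stdBasis_of_mem_Lclass hv hv0)

theorem stmt2 (d : ℕ) (hd : 1 ≤ d) (k : Fin d) :
    (∀ v ∈ Lclass d k, 2 ≤ ∑ i : Fin d, v i → ∃ x ∈ Xset d, nonneg (v + x)) ∧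
    ((k : ℕ) + 1 ≠ d →
      ∀ v ∈ Lclass d k, v ≠ stdBasis d k → precR d (stdBasis d k) v) ∧
    ((k : ℕ) + 1 = d →
      ∀ v ∈ Lclass d k, v ≠ 0 → precR d 0 v) :=
  stmt2_general d k
end

section
/- For d = 2 and every k ∈ ℤ_{≥0}, the number of principal-ideal elements satisfies C_{2k}^{(2)} = (k+1)(k+2)/2, and moreover C_{2k+1}^{(2)} = C_{2k}^{(2)}. -/
/-- `X_2 = {(-2,1),(0,-1)}`. -/
def X2 : Set (Fin 2 → ℤ) := {![-2, 1], ![0, -1]}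

def nonneg2 (v : Fin 2 → ℤ) : Prop := ∀ i, 0 ≤ v i

def cov2 (v w : Fin 2 → ℤ) : Prop := nonneg2 v ∧ nonneg2 w ∧ ∃ x ∈ X2, v = w + x

def prec2 : (Fin 2 → ℤ) → (Fin 2 → ℤ) → Prop := Relation.TransGen cov2

def ideal2 (v : Fin 2 → ℤ) : Set (Fin 2 → ℤ) := {v} ∪ { w | prec2 w v }

noncomputable def C2 (n : ℕ) : ℕ := (ideal2 ![(n : ℤ), 0]).ncard

/-!
Starting from `(n, 0)`, a step `(-2, 1)` moves along a diagonal and a step `(0, -1)` moves down,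
so the points below `(n, 0)` are exactly the `(n - 2a, c)` with `c ≤ a ≤ n / 2`: a triangle with
`1 + 2 + ⋯ + (⌊n/2⌋ + 1)` points. Hence `C_n` depends only on `⌊n/2⌋`.
-/

def latticePt (n a c : ℕ) : Fin 2 → ℤ := ![(n : ℤ) - 2 * a, c]

def triangleIndex (m : ℕ) : Finset (Σ _ : ℕ, ℕ) :=
  (Finset.range (m + 1)).sigma fun a => Finset.range (a + 1)

lemma card_triangleIndex (m : ℕ) : (triangleIndex m).card = (m + 1) * (m + 2) / 2 := by
  have hshift := Finset.sum_range_succ' (fun i => i) (m + 1)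
  rw [add_zero] at hshift
  simp only [triangleIndex, Finset.card_sigma, Finset.card_range, ← hshift,
    Finset.sum_range_id, Nat.add_sub_cancel, mul_comm]

section latticePt

variable {n a c : ℕ}

lemma latticePt_zero_zero (n : ℕ) : latticePt n 0 0 = ![(n : ℤ), 0] := by
  ext i; fin_cases i <;> simp [latticePt]

lemma nonneg2_latticePt_iff : nonneg2 (latticePt n a c) ↔ 2 * a ≤ n := by
  simp only [nonneg2, Fin.forall_fin_two, latticePt, Matrix.cons_val_zero, Matrix.cons_val_one,
    Matrix.cons_val_fin_one]
  omega

lemma latticePt_add_diag (n a c : ℕ) :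
    latticePt n a c + ![-2, 1] = latticePt n (a + 1) (c + 1) := by
  ext i; fin_cases i <;> simp [latticePt]; ring

lemma latticePt_add_down (n a c : ℕ) : latticePt n a (c + 1) + ![0, -1] = latticePt n a c := by
  ext i; fin_cases i <;> simp [latticePt]

lemma latticePt_injective (n : ℕ) :
    Function.Injective fun s : (Σ _ : ℕ, ℕ) => latticePt n s.1 s.2 := by
  rintro ⟨a, c⟩ ⟨a', c'⟩ h
  have h0 := congrFun h 0
  have h1 := congrFun h 1
  simp only [latticePt, Matrix.cons_val_zero, Matrix.cons_val_one, Matrix.cons_val_fin_one]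
    at h0 h1
  obtain rfl : a = a' := by omega
  obtain rfl : c = c' := by omega
  rfl

lemma cov2_latticePt_diag (h : 2 * (a + 1) ≤ n) :
    cov2 (latticePt n (a + 1) (c + 1)) (latticePt n a c) :=
  ⟨nonneg2_latticePt_iff.2 h, nonneg2_latticePt_iff.2 (by omega), ![-2, 1], Or.inl rfl,
    (latticePt_add_diag n a c).symm⟩

lemma cov2_latticePt_down (h : 2 * a ≤ n) : cov2 (latticePt n a c) (latticePt n a (c + 1)) :=
  ⟨nonneg2_latticePt_iff.2 h, nonneg2_latticePt_iff.2 h, ![0, -1], Or.inr rfl,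
    (latticePt_add_down n a c).symm⟩

lemma exists_latticePt_of_cov2 {u : Fin 2 → ℤ} (hca : c ≤ a) (h : cov2 u (latticePt n a c)) :
    ∃ a' c', c' ≤ a' ∧ 2 * a' ≤ n ∧ latticePt n a' c' = u := by
  obtain ⟨hu, -, x, hx | hx, rfl⟩ := h <;> subst hx
  · rw [latticePt_add_diag] at hu ⊢
    exact ⟨a + 1, c + 1, by omega, nonneg2_latticePt_iff.1 hu, rfl⟩
  · cases c with
    | zero => simpa [latticePt] using hu 1
    | succ c =>
      rw [latticePt_add_down] at hu ⊢
      exact ⟨a, c, by omega, nonneg2_latticePt_iff.1 hu, rfl⟩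

lemma reflTransGen_cov2_down (h : 2 * a ≤ n) (k : ℕ) :
    Relation.ReflTransGen cov2 (latticePt n a c) (latticePt n a (c + k)) := by
  induction k generalizing c with
  | zero => rfl
  | succ k ih =>
    have ih' := ih (c := c + 1)
    rw [Nat.add_right_comm] at ih'
    rw [← add_assoc]
    exact .head (cov2_latticePt_down h) ih'

lemma reflTransGen_cov2_diag (h : 2 * a ≤ n) :
    Relation.ReflTransGen cov2 (latticePt n a a) (latticePt n 0 0) := by
  induction a with
  | zero => rfl
  | succ a ih => exact .head (cov2_latticePt_diag h) (ih (by omega))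

end latticePt

lemma mem_ideal2_iff {v w : Fin 2 → ℤ} : w ∈ ideal2 v ↔ Relation.ReflTransGen cov2 w v := by
  rw [Relation.reflTransGen_iff_eq_or_transGen, eq_comm]
  rfl

lemma ideal2_eq (n : ℕ) :
    ideal2 ![(n : ℤ), 0] = {w | ∃ a c, c ≤ a ∧ 2 * a ≤ n ∧ latticePt n a c = w} := by
  ext w
  rw [mem_ideal2_iff, ← latticePt_zero_zero n, Set.mem_ofPred_eq]
  constructor
  · intro h
    induction h using Relation.ReflTransGen.head_induction_on with
    | refl => exact ⟨0, 0, le_rfl, Nat.zero_le _, rfl⟩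
    | head hcov _ ih =>
      obtain ⟨a, c, hca, han, rfl⟩ := ih
      exact exists_latticePt_of_cov2 hca hcov
  · rintro ⟨a, c, hca, han, rfl⟩
    have hdown := reflTransGen_cov2_down (c := c) han (a - c)
    rw [Nat.add_sub_cancel' hca] at hdown
    exact hdown.trans (reflTransGen_cov2_diag han)

lemma C2_eq (n : ℕ) : C2 n = (n / 2 + 1) * (n / 2 + 2) / 2 := by
  have htriangle : {w | ∃ a c, c ≤ a ∧ 2 * a ≤ n ∧ latticePt n a c = w} =
      (fun s : (Σ _ : ℕ, ℕ) => latticePt n s.1 s.2) '' ↑(triangleIndex (n / 2)) := by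
    ext w
    simp only [triangleIndex, Set.mem_ofPred_eq, Set.mem_image, Finset.mem_coe,
      Finset.mem_sigma, Finset.mem_range, Sigma.exists]
    refine exists_congr fun a => exists_congr fun c => ⟨?_, ?_⟩
    · rintro ⟨hca, han, rfl⟩
      exact ⟨⟨by omega, by omega⟩, rfl⟩
    · rintro ⟨⟨ha, hc⟩, rfl⟩
      exact ⟨by omega, by omega, rfl⟩
  rw [C2, ideal2_eq, htriangle, Set.ncard_image_of_injective _ (latticePt_injective n),
    Set.ncard_coe_finset, card_triangleIndex]

theorem stmt4 (k : ℕ) :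
    C2 (2 * k) = (k + 1) * (k + 2) / 2 ∧ C2 (2 * k + 1) = C2 (2 * k) := by
  have hdiv : (2 * k + 1) / 2 = 2 * k / 2 := by omega
  refine ⟨?_, by rw [C2_eq, C2_eq, hdiv]⟩
  rw [C2_eq, Nat.mul_div_cancel_left k two_pos]
end

section
/- For d = 3, the restriction to Λ_3 = ℤ_{≥0}^3 of the order ≺' on ℤ^3 (defined as the transitive closure, within all of ℤ^3, of w + x ⋖ w for x ∈ X_3) coincides with the order ≺ on Λ_3 (defined using only paths that stay inside Λ_3). -/
/-- `X_3 = {(1,-2,0), (-2,1,0), (-1,-1,1), (0,0,-1)}`. -/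
def X3 : Set (Fin 3 → ℤ) := {![1, -2, 0], ![-2, 1, 0], ![-1, -1, 1], ![0, 0, -1]}

def nonneg3 (v : Fin 3 → ℤ) : Prop := ∀ i, 0 ≤ v i

/-- Covering relation `v ⋖ w` on `Λ_3 = ℤ_{≥0}^3`. -/
def cov3 (v w : Fin 3 → ℤ) : Prop := nonneg3 v ∧ nonneg3 w ∧ ∃ x ∈ X3, v = w + x

/-- The order `≺` on `Λ_3`. -/
def prec3 : (Fin 3 → ℤ) → (Fin 3 → ℤ) → Prop := Relation.TransGen cov3

/-- The principal ideal `I(v) = {v} ∪ {w : w ≺ v}`. -/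
def ideal3 (v : Fin 3 → ℤ) : Set (Fin 3 → ℤ) := {v} ∪ { w | prec3 w v }

/-- `C_n^{(3)} = |I(n·e(1))|`. -/
noncomputable def C3 (n : ℕ) : ℕ := (ideal3 ![(n : ℤ), 0, 0]).ncard

/-- `C_{n,h}^{(3)}`: the number of elements of height `h` in `I(n·e(1))`. -/
noncomputable def C3h (n h : ℕ) : ℕ :=
  ({ w ∈ ideal3 ![(n : ℤ), 0, 0] | w 0 + w 1 + w 2 = (h : ℤ) }).ncard

/-- The order `≺'` on all of `ℤ^3`. -/
def prec3' : (Fin 3 → ℤ) → (Fin 3 → ℤ) → Prop :=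
  Relation.TransGen (fun v w => ∃ x ∈ X3, v = w + x)

/-!
Every `≺'`-chain from `w` down to `v` only matters through how many times each generator
`a = (1,-2,0)`, `b = (-2,1,0)`, `c = (-1,-1,1)`, `d = (0,0,-1)` of `X3` is used, so
`v = w + p a + q b + r c + s d`. Conversely, such a decomposition between two points of `Λ_3`
can be realised by a chain inside `Λ_3`: greedily subtract a generator whose subtraction keeps
the point nonnegative. A short case check shows one always exists, except when the remaining
combination is `a + b` at a point `(1, 1, z)`; there `a + b = c + d` and the step `c` works.
-/

/-- `p a + q b + r c + s d`, with `a, b, c, d` the elements of `X3` in the order listed. -/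
def x3Comb (p q r s : ℕ) : Fin 3 → ℤ :=
  ![(p : ℤ) - 2 * q - r, (q : ℤ) - 2 * p - r, (r : ℤ) - s]

@[simp]
lemma x3Comb_zero : x3Comb 0 0 0 0 = 0 := by
  funext i
  fin_cases i <;> simp [x3Comb]

lemma x3Comb_add (p q r s p' q' r' s' : ℕ) :
    x3Comb p q r s + x3Comb p' q' r' s' = x3Comb (p + p') (q + q') (r + r') (s + s') := by
  funext i
  fin_cases i <;> simp [x3Comb] <;> ring

lemma exists_x3Comb_of_mem_X3 {x : Fin 3 → ℤ} (hx : x ∈ X3) :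
    ∃ p q r s : ℕ, p + q + r + s = 1 ∧ x = x3Comb p q r s := by
  simp only [X3, Set.mem_insert_iff, Set.mem_singleton_iff] at hx
  rcases hx with rfl | rfl | rfl | rfl
  · exact ⟨1, 0, 0, 0, rfl, by simp [x3Comb]⟩
  · exact ⟨0, 1, 0, 0, rfl, by simp [x3Comb]⟩
  · exact ⟨0, 0, 1, 0, rfl, by simp [x3Comb]⟩
  · exact ⟨0, 0, 0, 1, rfl, by simp [x3Comb]⟩

lemma exists_x3Comb_of_prec3' {v w : Fin 3 → ℤ} (h : prec3' v w) :
    ∃ p q r s : ℕ, 0 < p + q + r + s ∧ v = w + x3Comb p q r s := by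
  induction h with
  | single hx =>
    obtain ⟨x, hx, rfl⟩ := hx
    obtain ⟨p, q, r, s, hn, rfl⟩ := exists_x3Comb_of_mem_X3 hx
    exact ⟨p, q, r, s, by omega, rfl⟩
  | tail _ hstep ih =>
    obtain ⟨x, hx, rfl⟩ := hstep
    obtain ⟨p, q, r, s, hn, rfl⟩ := ih
    obtain ⟨p', q', r', s', -, rfl⟩ := exists_x3Comb_of_mem_X3 hx
    exact ⟨p' + p, q' + q, r' + r, s' + s, by omega, by rw [add_assoc, x3Comb_add]⟩

lemma nonneg3_add_x3Comb_iff (u : Fin 3 → ℤ) (p q r s : ℕ) :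
    nonneg3 (u + x3Comb p q r s) ↔
      0 ≤ u 0 + p - 2 * q - r ∧ 0 ≤ u 1 + q - 2 * p - r ∧ 0 ≤ u 2 + r - s := by
  simp only [nonneg3, Fin.forall_fin_succ, IsEmpty.forall_iff, and_true, Pi.add_apply, x3Comb,
    Fin.succ_zero_eq_one, Fin.succ_one_eq_two, Matrix.cons_val_zero, Matrix.cons_val_succ]
  omega

lemma exists_X3_step {u : Fin 3 → ℤ} {p q r s : ℕ} (hu : nonneg3 u)
    (hv : nonneg3 (u + x3Comb p q r s)) (hn : 0 < p + q + r + s) :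
    ∃ x ∈ X3, nonneg3 (u + x) ∧ ∃ p' q' r' s' : ℕ, p' + q' + r' + s' < p + q + r + s ∧
      u + x3Comb p q r s = u + x + x3Comb p' q' r' s' := by
  rw [nonneg3_add_x3Comb_iff] at hv
  have := hu 0; have := hu 1; have := hu 2
  have hcases : (1 ≤ s ∧ 1 ≤ u 2) ∨ (1 ≤ p ∧ 2 ≤ u 1) ∨ (1 ≤ q ∧ 2 ≤ u 0) ∨
      (1 ≤ r ∧ 1 ≤ u 0 ∧ 1 ≤ u 1) ∨ (p = 1 ∧ q = 1 ∧ r = 0 ∧ s = 0 ∧ u 0 = 1 ∧ u 1 = 1) := by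
    omega
  rcases hcases with h | h | h | h | ⟨rfl, rfl, rfl, rfl, h0, h1⟩
  · refine ⟨x3Comb 0 0 0 1, by simp [X3, x3Comb], ?_, p, q, r, s - 1, by omega, ?_⟩
    · rw [nonneg3_add_x3Comb_iff]; push_cast; omega
    · rw [add_assoc, x3Comb_add]; congr 2 <;> omega
  · refine ⟨x3Comb 1 0 0 0, by simp [X3, x3Comb], ?_, p - 1, q, r, s, by omega, ?_⟩
    · rw [nonneg3_add_x3Comb_iff]; push_cast; omega
    · rw [add_assoc, x3Comb_add]; congr 2 <;> omega
  · refine ⟨x3Comb 0 1 0 0, by simp [X3, x3Comb], ?_, p, q - 1, r, s, by omega, ?_⟩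
    · rw [nonneg3_add_x3Comb_iff]; push_cast; omega
    · rw [add_assoc, x3Comb_add]; congr 2 <;> omega
  · refine ⟨x3Comb 0 0 1 0, by simp [X3, x3Comb], ?_, p, q, r - 1, s, by omega, ?_⟩
    · rw [nonneg3_add_x3Comb_iff]; push_cast; omega
    · rw [add_assoc, x3Comb_add]; congr 2 <;> omega
  · -- `a + b = c + d`
    refine ⟨x3Comb 0 0 1 0, by simp [X3, x3Comb], ?_, 0, 0, 0, 1, by omega, ?_⟩
    · rw [nonneg3_add_x3Comb_iff]; push_cast; omega
    · rw [add_assoc, x3Comb_add]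
      funext i
      fin_cases i <;> simp [x3Comb]

lemma prec3_add_x3Comb {u : Fin 3 → ℤ} {p q r s : ℕ} (hu : nonneg3 u)
    (hv : nonneg3 (u + x3Comb p q r s)) (hn : 0 < p + q + r + s) :
    prec3 (u + x3Comb p q r s) u := by
  induction hN : p + q + r + s using Nat.strong_induction_on generalizing u p q r s with
  | _ N ih =>
  obtain ⟨x, hx, hux, p', q', r', s', hlt, heq⟩ := exists_X3_step hu hv hn
  have hcov : cov3 (u + x) u := ⟨hux, hu, x, hx, rfl⟩
  rw [heq] at hv ⊢
  rcases Nat.eq_zero_or_pos (p' + q' + r' + s') with h0 | hpos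
  · obtain ⟨rfl, rfl, rfl, rfl⟩ : p' = 0 ∧ q' = 0 ∧ r' = 0 ∧ s' = 0 := by omega
    rw [x3Comb_zero, add_zero]
    exact .single hcov
  · exact (ih _ (hN ▸ hlt) hux hv hpos rfl).tail hcov

lemma prec3_of_prec3' {v w : Fin 3 → ℤ} (hv : nonneg3 v) (hw : nonneg3 w) (h : prec3' v w) :
    prec3 v w := by
  obtain ⟨p, q, r, s, hn, rfl⟩ := exists_x3Comb_of_prec3' h
  exact prec3_add_x3Comb hw hv hn

lemma prec3'_of_prec3 {v w : Fin 3 → ℤ} (h : prec3 v w) : prec3' v w :=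
  Relation.TransGen.mono (fun _ _ (hcov : cov3 _ _) => hcov.2.2) v w h

theorem stmt6 (v w : Fin 3 → ℤ) (hv : nonneg3 v) (hw : nonneg3 w) :
    prec3' v w ↔ prec3 v w :=
  ⟨prec3_of_prec3' hv hw, prec3'_of_prec3⟩
end

section
/- For d = 3 and h ≥ ⌈n/2⌉, the number C_{n,h}^{(3)} of elements of height h in the principal ideal I(n·e(1)) equals the number of partitions of n - h into at most 3 parts. Concretely, the map sending a partition (a,b,c) of n-h (a ≥ b ≥ c ≥ 0) to (n,0,0) + a(-2,1,0) + b(-1,-1,1) + c(0,0,-1) is a bijection onto the set of height-h elements of I(n·e(1)). -/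
lemma nonneg3_vec {a b c : ℤ} : nonneg3 ![a, b, c] ↔ 0 ≤ a ∧ 0 ≤ b ∧ 0 ≤ c := by
  simp [nonneg3, Fin.forall_fin_succ]

lemma forall_mem_X3 {P : (Fin 3 → ℤ) → Prop} :
    (∀ x ∈ X3, P x) ↔ P ![1, -2, 0] ∧ P ![-2, 1, 0] ∧ P ![-1, -1, 1] ∧ P ![0, 0, -1] := by
  simp [X3]

lemma mem_ideal3_of_cov3 {v u w : Fin 3 → ℤ} (h : cov3 u w) (hw : w ∈ ideal3 v) :
    u ∈ ideal3 v := by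
  rcases hw with rfl | hw
  · exact Or.inr (.single h)
  · exact Or.inr (.head h hw)

lemma add_smul_mem_ideal3 {v w x : Fin 3 → ℤ} (hx : x ∈ X3) (hw : w ∈ ideal3 v)
    (hw₀ : nonneg3 w) {m : ℕ} (hm : nonneg3 (w + (m : ℤ) • x)) :
    w + (m : ℤ) • x ∈ ideal3 v := by
  induction m with
  | zero => simpa using hw
  | succ m ih =>
    -- each coordinate is affine in `m`, so it is nonnegative at `m` once it is at `0` and `m + 1`
    have hm' : nonneg3 (w + (m : ℤ) • x) := fun i => by
      have h₀ := hw₀ i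
      have h₁ := hm i
      simp only [Pi.add_apply, Pi.smul_apply, smul_eq_mul, Nat.cast_succ] at h₁ ⊢
      rcases le_total 0 (x i) with hxi | hxi <;> nlinarith
    refine mem_ideal3_of_cov3 ⟨hm, hm', x, hx, ?_⟩ (ih hm')
    push_cast
    module

lemma ideal3_induction {v : Fin 3 → ℤ} (P : (Fin 3 → ℤ) → Prop) (hv : P v)
    (hstep : ∀ ⦃u w⦄, cov3 u w → P w → P u) {w : Fin 3 → ℤ} (hw : w ∈ ideal3 v) : P w := by
  rcases hw with rfl | hw
  · exact hv
  · induction hw using Relation.TransGen.head_induction_on with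
    | single h => exact hstep h hv
    | head h _ ih => exact hstep h ih

lemma nonneg3_of_mem_ideal3 {v w : Fin 3 → ℤ} (hv : nonneg3 v) (hw : w ∈ ideal3 v) :
    nonneg3 w :=
  ideal3_induction nonneg3 hv (fun _ _ h _ => h.1) hw

lemma three_dvd_of_mem_ideal3 {v w : Fin 3 → ℤ} (hw : w ∈ ideal3 v) :
    3 ∣ (w 1 - w 0) - (v 1 - v 0) := by
  refine ideal3_induction (fun w => 3 ∣ (w 1 - w 0) - (v 1 - v 0)) (by simp) ?_ hw
  rintro - w ⟨-, -, x, hx, rfl⟩ hw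
  have hx3 : 3 ∣ x 1 - x 0 := by
    revert x; rw [forall_mem_X3]; decide
  simp only [Pi.add_apply]
  omega

lemma weight_le_of_mem_ideal3 {v w : Fin 3 → ℤ} (hw : w ∈ ideal3 v) :
    w 0 + 2 * w 1 + 3 * w 2 ≤ v 0 + 2 * v 1 + 3 * v 2 := by
  refine ideal3_induction (fun w => w 0 + 2 * w 1 + 3 * w 2 ≤ v 0 + 2 * v 1 + 3 * v 2)
    le_rfl ?_ hw
  rintro - w ⟨-, -, x, hx, rfl⟩ hw
  have hx3 : x 0 + 2 * x 1 + 3 * x 2 ≤ 0 := by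
    revert x; rw [forall_mem_X3]; decide
  simp only [Pi.add_apply]
  linarith

def partitions3 (m : ℕ) : Set (ℕ × ℕ × ℕ) :=
  {p | p.2.1 ≤ p.1 ∧ p.2.2 ≤ p.2.1 ∧ p.1 + p.2.1 + p.2.2 = m}

def partitionPoint (n : ℕ) (p : ℕ × ℕ × ℕ) : Fin 3 → ℤ :=
  ![(n : ℤ), 0, 0] + (p.1 : ℤ) • ![-2, 1, 0] + (p.2.1 : ℤ) • ![-1, -1, 1]
    + (p.2.2 : ℤ) • ![0, 0, -1]

lemma partitionPoint_eq (n a b c : ℕ) :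
    partitionPoint n (a, b, c) = ![(n : ℤ) - 2 * a - b, (a : ℤ) - b, (b : ℤ) - c] := by
  ext i; fin_cases i <;> simp [partitionPoint] <;> ring

lemma partitionPoint_injective (n : ℕ) : Function.Injective (partitionPoint n) := by
  rintro ⟨a, b, c⟩ ⟨a', b', c'⟩ h
  simp only [partitionPoint_eq] at h
  have h₀ := congrFun h 0
  have h₁ := congrFun h 1
  have h₂ := congrFun h 2
  simp only [Matrix.cons_val] at h₀ h₁ h₂
  simp only [Prod.mk.injEq]
  omega

lemma partitionPoint_mem_ideal3 {n a b c : ℕ} (hba : b ≤ a) (hcb : c ≤ b) (hab : 2 * a + b ≤ n) :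
    partitionPoint n (a, b, c) ∈ ideal3 ![(n : ℤ), 0, 0] := by
  have h₀ : ![(n : ℤ), 0, 0] ∈ ideal3 ![(n : ℤ), 0, 0] := Set.mem_union_left _ rfl
  have h₁ := add_smul_mem_ideal3 (x := ![-2, 1, 0]) (m := a) (by simp [X3]) h₀
    (by simp [nonneg3_vec]) (by simp [nonneg3_vec]; omega)
  have h₂ := add_smul_mem_ideal3 (x := ![-1, -1, 1]) (m := b) (by simp [X3]) h₁
    (by simp [nonneg3_vec]; omega)
    (by simp [nonneg3_vec]; omega)
  exact add_smul_mem_ideal3 (x := ![0, 0, -1]) (m := c) (by simp [X3]) h₂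
    (by simp [nonneg3_vec]; omega)
    (by simp [nonneg3_vec]; omega)

lemma exists_partitionPoint_eq {n : ℕ} {w : Fin 3 → ℤ} (hw : w ∈ ideal3 ![(n : ℤ), 0, 0]) :
    ∃ a b c : ℕ, b ≤ a ∧ c ≤ b ∧ partitionPoint n (a, b, c) = w := by
  have hnn := nonneg3_of_mem_ideal3 (by simp [nonneg3_vec]) hw
  have hdvd := three_dvd_of_mem_ideal3 hw
  have hwt := weight_le_of_mem_ideal3 hw
  simp only [Matrix.cons_val] at hdvd hwt
  obtain ⟨a, ha⟩ := hdvd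
  have h₀ := hnn 0
  have h₁ := hnn 1
  have h₂ := hnn 2
  refine ⟨a.toNat, (a - w 1).toNat, (a - w 1 - w 2).toNat, by omega, by omega, ?_⟩
  rw [partitionPoint_eq]
  ext i; fin_cases i <;> simp <;> omega

lemma bijOn_partitionPoint {n h : ℕ} (hn : h ≤ n) (hh : (n + 1) / 2 ≤ h) :
    Set.BijOn (partitionPoint n) (partitions3 (n - h))
      {w ∈ ideal3 ![(n : ℤ), 0, 0] | w 0 + w 1 + w 2 = (h : ℤ)} := by
  refine ⟨?_, (partitionPoint_injective n).injOn, ?_⟩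
  · rintro ⟨a, b, c⟩ ⟨hba : b ≤ a, hcb : c ≤ b, habc : a + b + c = n - h⟩
    refine ⟨partitionPoint_mem_ideal3 hba hcb (by omega), ?_⟩
    simp only [partitionPoint_eq, Matrix.cons_val]
    omega
  · rintro w ⟨hw, hwh⟩
    obtain ⟨a, b, c, hba, hcb, rfl⟩ := exists_partitionPoint_eq hw
    refine ⟨(a, b, c), ⟨hba, hcb, ?_⟩, rfl⟩
    simp only [partitionPoint_eq, Matrix.cons_val] at hwh
    show a + b + c = n - h
    omega

theorem stmt7 (n h : ℕ) (hn : h ≤ n) (hh : (n + 1) / 2 ≤ h) :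
    C3h n h =
      Set.ncard { p : ℕ × ℕ × ℕ |
        p.2.1 ≤ p.1 ∧ p.2.2 ≤ p.2.1 ∧ p.1 + p.2.1 + p.2.2 = n - h } ∧
    Set.BijOn
      (fun p : ℕ × ℕ × ℕ =>
        ![(n : ℤ), 0, 0] + (p.1 : ℤ) • ![-2, 1, 0] + (p.2.1 : ℤ) • ![-1, -1, 1]
          + (p.2.2 : ℤ) • ![0, 0, -1])
      { p : ℕ × ℕ × ℕ | p.2.1 ≤ p.1 ∧ p.2.2 ≤ p.2.1 ∧ p.1 + p.2.1 + p.2.2 = n - h }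
      { w ∈ ideal3 ![(n : ℤ), 0, 0] | w 0 + w 1 + w 2 = (h : ℤ) } := by
  have hbij := bijOn_partitionPoint hn hh
  refine ⟨?_, hbij⟩
  rw [C3h, ← hbij.image_eq, hbij.injOn.ncard_image]
  rfl
end

section
/- For every n ≥ 0 and every (x,y,z) ∈ ℤ_{≥0}^3, there is at most one distinguished character (a_1,...,a_6) with a_1 = x+y+z, a_3 = y+z, a_5 = z and a_1+a_2+a_3+a_4+a_5+a_6 = 2n; moreover the signature map H ↦ (a_1 - a_3, a_3 - a_5, a_5) gives a bijection between distinguished characters of perimeter 2n and the principal ideal I(n·e(1)) in (ℤ_{≥0}^3, ≺). -/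
/-- A distinguished character of a t-hexagon. -/
def DChar (a : Fin 6 → ℕ) : Prop :=
  a 0 + a 1 = a 3 + a 4 ∧ a 1 + a 2 = a 4 + a 5 ∧
  a 0 + a 2 + a 4 ≤ a 1 + a 3 + a 5 ∧ a 2 ≤ a 0 ∧ a 4 ≤ a 2

/-! The weight `v₀ + 2v₁ + 3v₂` drops by `0` or `3` along every covering step, and
conversely every point of `ℤ_{≥0}^3` of weight `n - 3k`, `k : ℕ`, can be walked up to
`(n, 0, 0)`: first trade the third coordinate, then the second, then climb by `3` along the
first axis. So `I(n·e(1))` is that set of points. A distinguished character of perimeter `2n`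
is `(x+y+z, z+2k, y+z, x+y+z+2k, z, y+z+2k)` with `x + 2y + 3z + 3k = n`, and its signature
is `(x, y, z)`. -/

open Relation

def weight3 (v : Fin 3 → ℤ) : ℤ := v 0 + 2 * v 1 + 3 * v 2

lemma weight3_add (v w : Fin 3 → ℤ) : weight3 (v + w) = weight3 v + weight3 w := by
  simp only [weight3, Pi.add_apply]; ring

lemma weight3_eq_of_mem_X3 {x : Fin 3 → ℤ} (hx : x ∈ X3) :
    weight3 x = -3 ∨ weight3 x = 0 := by
  simp only [X3, Set.mem_insert_iff, Set.mem_singleton_iff] at hx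
  rcases hx with rfl | rfl | rfl | rfl <;> simp [weight3]

lemma cov3.exists_weight3_add {v w : Fin 3 → ℤ} (h : cov3 v w) :
    ∃ j : ℕ, weight3 v + 3 * j = weight3 w := by
  obtain ⟨-, -, x, hx, rfl⟩ := h
  rcases weight3_eq_of_mem_X3 hx with h | h
  · exact ⟨1, by rw [weight3_add, h]; ring⟩
  · exact ⟨0, by rw [weight3_add, h]; ring⟩

def pt3 (x y z : ℕ) : Fin 3 → ℤ := ![x, y, z]

lemma nonneg3_pt3 (x y z : ℕ) : nonneg3 (pt3 x y z) := by
  intro i; fin_cases i <;> simp [pt3]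

lemma nonneg3.exists_eq_pt3 {v : Fin 3 → ℤ} (hv : nonneg3 v) :
    ∃ x y z : ℕ, v = pt3 x y z := by
  lift v 0 to ℕ using hv 0 with x hx
  lift v 1 to ℕ using hv 1 with y hy
  lift v 2 to ℕ using hv 2 with z hz
  exact ⟨x, y, z, by ext i; fin_cases i <;> simp [pt3, hx, hy, hz]⟩

lemma pt3_inj {x y z x' y' z' : ℕ} :
    pt3 x y z = pt3 x' y' z' ↔ x = x' ∧ y = y' ∧ z = z' := by
  refine ⟨fun h => ?_, by rintro ⟨rfl, rfl, rfl⟩; rfl⟩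
  have h0 := congrFun h 0
  have h1 := congrFun h 1
  have h2 := congrFun h 2
  simp only [pt3] at h0 h1 h2
  simp_all

lemma weight3_pt3 (x y z : ℕ) : weight3 (pt3 x y z) = ((x + 2 * y + 3 * z : ℕ) : ℤ) := by
  simp [weight3, pt3]

lemma cov3_pt3_trade_third (a b c : ℕ) : cov3 (pt3 a b (c + 1)) (pt3 (a + 1) (b + 1) c) :=
  ⟨nonneg3_pt3 _ _ _, nonneg3_pt3 _ _ _, ![-1, -1, 1], by simp [X3],
    by ext i; fin_cases i <;> simp [pt3]⟩

lemma cov3_pt3_trade_second (a b c : ℕ) : cov3 (pt3 a (b + 1) c) (pt3 (a + 2) b c) :=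
  ⟨nonneg3_pt3 _ _ _, nonneg3_pt3 _ _ _, ![-2, 1, 0], by simp [X3],
    by ext i; fin_cases i <;> simp [pt3]⟩

lemma cov3_pt3_succ_third (a b c : ℕ) : cov3 (pt3 a b c) (pt3 a b (c + 1)) :=
  ⟨nonneg3_pt3 _ _ _, nonneg3_pt3 _ _ _, ![0, 0, -1], by simp [X3],
    by ext i; fin_cases i <;> simp [pt3]⟩

lemma reflTransGen_pt3_clear_third (a b c : ℕ) :
    ReflTransGen cov3 (pt3 a b c) (pt3 (a + c) (b + c) 0) := by
  induction c generalizing a b with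
  | zero => rfl
  | succ c ih =>
    refine .head (cov3_pt3_trade_third a b c) ?_
    convert ih (a + 1) (b + 1) using 2 <;> omega

lemma reflTransGen_pt3_clear_second (a b : ℕ) :
    ReflTransGen cov3 (pt3 a b 0) (pt3 (a + 2 * b) 0 0) := by
  induction b generalizing a with
  | zero => rfl
  | succ b ih =>
    refine .head (cov3_pt3_trade_second a b 0) ?_
    convert ih (a + 2) using 2; omega

lemma reflTransGen_pt3_climb_first (a k : ℕ) :
    ReflTransGen cov3 (pt3 a 0 0) (pt3 (a + 3 * k) 0 0) := by
  induction k with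
  | zero => rfl
  | succ k ih =>
    refine ih.trans (.head (cov3_pt3_succ_third _ 0 0) (.head (cov3_pt3_trade_third _ 0 0)
      (.single ?_)))
    convert cov3_pt3_trade_second (a + 3 * k + 1) 0 0 using 2; omega

lemma reflTransGen_pt3 (x y z k : ℕ) :
    ReflTransGen cov3 (pt3 x y z) (pt3 (x + 2 * y + 3 * z + 3 * k) 0 0) := by
  refine ((reflTransGen_pt3_clear_third x y z).trans (reflTransGen_pt3_clear_second _ _)).trans ?_
  convert reflTransGen_pt3_climb_first _ k using 2; omega

lemma mem_ideal3_iff_reflTransGen (v w : Fin 3 → ℤ) :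
    v ∈ ideal3 w ↔ ReflTransGen cov3 v w := by
  rw [reflTransGen_iff_eq_or_transGen, eq_comm]; rfl

lemma mem_ideal3_pt3_iff {n : ℕ} {v : Fin 3 → ℤ} :
    v ∈ ideal3 (pt3 n 0 0) ↔ nonneg3 v ∧ ∃ k : ℕ, weight3 v + 3 * k = n := by
  rw [mem_ideal3_iff_reflTransGen]
  constructor
  · intro h
    induction h using ReflTransGen.head_induction_on with
    | refl => exact ⟨nonneg3_pt3 _ _ _, 0, by simp [weight3_pt3]⟩
    | head hcov _ ih =>
      obtain ⟨k, hk⟩ := ih.2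
      obtain ⟨j, hj⟩ := hcov.exists_weight3_add
      exact ⟨hcov.1, j + k, by push_cast; linarith⟩
  · rintro ⟨hv, k, hk⟩
    obtain ⟨x, y, z, rfl⟩ := hv.exists_eq_pt3
    rw [weight3_pt3] at hk
    convert reflTransGen_pt3 x y z k using 2
    omega

def dcharOf (x y z k : ℕ) : Fin 6 → ℕ :=
  ![x + y + z, z + 2 * k, y + z, x + y + z + 2 * k, z, y + z + 2 * k]

lemma dChar_dcharOf (x y z k : ℕ) : DChar (dcharOf x y z k) := by
  simp [DChar, dcharOf]; omega

lemma sum_dcharOf (x y z k : ℕ) :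
    ∑ i, dcharOf x y z k i = 2 * (x + 2 * y + 3 * z + 3 * k) := by
  simp [Fin.sum_univ_six, dcharOf]; ring

lemma DChar.exists_eq_dcharOf {a : Fin 6 → ℕ} {n : ℕ} (ha : DChar a)
    (hsum : ∑ i, a i = 2 * n) :
    ∃ x y z k, x + 2 * y + 3 * z + 3 * k = n ∧ a = dcharOf x y z k := by
  obtain ⟨h03, h25, hineq, h20, h42⟩ := ha
  rw [Fin.sum_univ_six] at hsum
  obtain ⟨k, hk⟩ : 2 ∣ a 1 - a 4 := by omega
  refine ⟨a 0 - a 2, a 2 - a 4, a 4, k, by omega, ?_⟩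
  ext i; fin_cases i <;> simp [dcharOf] <;> omega

def signature (a : Fin 6 → ℕ) : Fin 3 → ℤ :=
  ![(a 0 : ℤ) - (a 2 : ℤ), (a 2 : ℤ) - (a 4 : ℤ), (a 4 : ℤ)]

lemma signature_dcharOf (x y z k : ℕ) : signature (dcharOf x y z k) = pt3 x y z := by
  ext i; fin_cases i <;> simp [signature, dcharOf, pt3]

lemma DChar.eq_of_sum_eq_two_mul {a b : Fin 6 → ℕ} {n : ℕ} (ha : DChar a) (hb : DChar b)
    (hsa : ∑ i, a i = 2 * n) (hsb : ∑ i, b i = 2 * n) (h0 : a 0 = b 0) (h2 : a 2 = b 2)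
    (h4 : a 4 = b 4) : a = b := by
  obtain ⟨x, y, z, k, hn, rfl⟩ := ha.exists_eq_dcharOf hsa
  obtain ⟨x', y', z', k', hn', rfl⟩ := hb.exists_eq_dcharOf hsb
  simp only [dcharOf, Matrix.cons_val] at h0 h2 h4
  obtain ⟨rfl, rfl, rfl, rfl⟩ : x = x' ∧ y = y' ∧ z = z' ∧ k = k' := by omega
  rfl

lemma bijOn_signature (n : ℕ) :
    Set.BijOn signature { a : Fin 6 → ℕ | DChar a ∧ (∑ i, a i) = 2 * n }
      (ideal3 (pt3 n 0 0)) := by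
  refine ⟨?_, ?_, ?_⟩
  · rintro a ⟨ha, hsum⟩
    obtain ⟨x, y, z, k, hn, rfl⟩ := ha.exists_eq_dcharOf hsum
    rw [signature_dcharOf, mem_ideal3_pt3_iff]
    exact ⟨nonneg3_pt3 _ _ _, k, by rw [weight3_pt3]; omega⟩
  · rintro a ⟨ha, hsa⟩ b ⟨hb, hsb⟩ hab
    obtain ⟨x, y, z, k, hn, rfl⟩ := ha.exists_eq_dcharOf hsa
    obtain ⟨x', y', z', k', hn', rfl⟩ := hb.exists_eq_dcharOf hsb
    rw [signature_dcharOf, signature_dcharOf, pt3_inj] at hab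
    obtain ⟨rfl, rfl, rfl⟩ := hab
    obtain rfl : k = k' := by omega
    rfl
  · rintro v hv
    obtain ⟨hv, k, hk⟩ := mem_ideal3_pt3_iff.mp hv
    obtain ⟨x, y, z, rfl⟩ := hv.exists_eq_pt3
    rw [weight3_pt3] at hk
    exact ⟨dcharOf x y z k, ⟨dChar_dcharOf x y z k, by rw [sum_dcharOf]; omega⟩,
      signature_dcharOf x y z k⟩

theorem stmt18 (n : ℕ) :
    (∀ a b : Fin 6 → ℕ, DChar a → DChar b →
      (∑ i, a i) = 2 * n → (∑ i, b i) = 2 * n →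
      a 0 = b 0 → a 2 = b 2 → a 4 = b 4 → a = b) ∧
    Set.BijOn
      (fun a : Fin 6 → ℕ =>
        (![(a 0 : ℤ) - (a 2 : ℤ), (a 2 : ℤ) - (a 4 : ℤ), (a 4 : ℤ)] : Fin 3 → ℤ))
      { a : Fin 6 → ℕ | DChar a ∧ (∑ i, a i) = 2 * n }
      (ideal3 ![(n : ℤ), 0, 0]) :=
  ⟨fun _ _ ha hb hsa hsb => ha.eq_of_sum_eq_two_mul hb hsa hsb, bijOn_signature n⟩
end

section
/- For every d ≥ 1 and n ≥ 0, C_n^{(d)} = ∑_{k ≥ 0} P^{(d)}(n - kd), where P^{(d)}(m) is the number of partitions of m into at most d parts (and P^{(d)}(m) = 0 for m < 0); equivalently, ∑_{n≥0} C_n^{(d)} t^n = 1/((1-t^d) · (1-t)(1-t^2)···(1-t^d)) as formal power series. -/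
/-- The number of partitions of `m` into at most `d` parts. -/
noncomputable def Ppart (d : ℕ) (m : ℤ) : ℕ :=
  Set.ncard { v : Fin d → ℕ | (∀ i j : Fin d, i ≤ j → v j ≤ v i) ∧ (∑ i, (v i : ℤ)) = m }

/-!
Give `v ∈ ℤ^d` the weight `∑ i v_i` (indices `1, …, d`). A covering step `v = w + (e_k - e_i - e_j)`
changes the weight by `k - i - j`, a multiple of `d` strictly between `-2d` and `d`, hence by `0`
or `-d`. Conversely, splitting a unit at an index `i > 1` into units at `i - 1` and `1` is a
covering step upwards that keeps the weight and lowers `∑ (i - 1) v_i`, so every `v ≥ 0` lies below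
`(weight v) e₁`; and `n e₁ ⋖ n e₁ + e_d ≼ (n + d) e₁`. Hence `I(n e₁)` is the disjoint union over
`k ≤ n` of the nonnegative vectors of weight `n - kd`. Their number and `P^{(d)}(n - kd)` satisfy
the same recursion in `d`, obtained by fixing the last coordinate (the multiplicity of the part
`d`, resp. the smallest of `d` parts), so they agree. Multiplying by `1 - t^e` telescopes
`∑_k f(n - ke)`, which turns these sums into the product formula.
-/

open Finset PowerSeries Relation Function

theorem ncard_biUnion_range {α : Type*} {S : ℕ → Set α} (hS : ∀ k, (S k).Finite)
    (h : Pairwise (Disjoint on S)) (N : ℕ) :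
    (⋃ k ∈ range N, S k).ncard = ∑ k ∈ range N, (S k).ncard := by
  rw [← finsum_mem_coe_finset]
  exact Set.Finite.ncard_biUnion (Finset.finite_toSet _) (fun k _ => hS k)
    (h.set_pairwise _)

theorem ncard_biUnion_range_snoc {β : Type*} {d : ℕ} {A : ℕ → Set (Fin d → β)}
    (hA : ∀ k, (A k).Finite)
    {g : ℕ → (Fin d → β) → Fin d → β} (hg : ∀ k, Injective (g k)) {c : ℕ → β}
    (hc : Injective c) (N : ℕ) :
    (⋃ k ∈ range N, (fun v => (Fin.snoc (g k v) (c k) : Fin (d + 1) → β)) '' A k).ncard =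
      ∑ k ∈ range N, (A k).ncard := by
  rw [ncard_biUnion_range (fun k => (hA k).image _)]
  · exact sum_congr rfl fun k _ =>
      Set.ncard_image_of_injective _ fun v w h => hg k (Fin.snoc_injective2.left _ h)
  · rintro k l hkl
    refine Set.disjoint_left.2 ?_
    rintro _ ⟨v, -, rfl⟩ ⟨w, -, h⟩
    exact hkl (hc (by simpa using congrFun h (Fin.last d))).symm

section GeneratingFunction

variable {K : Type*} [Field K] {e : ℕ} {f : ℤ → K}

theorem sum_range_sub_mul_eq_of_lt (he : 1 ≤ e) (hf : ∀ m < 0, f m = 0) {m : ℤ} {N N' : ℕ}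
    (hN : m < N) (hNN' : N ≤ N') :
    ∑ k ∈ range N', f (m - k * e) = ∑ k ∈ range N, f (m - k * e) := by
  refine (sum_subset (range_subset_range.2 hNN') fun k _ hk => hf _ ?_).symm
  have : (N : ℤ) ≤ k := by simpa using hk
  nlinarith [(by exact_mod_cast he : (1 : ℤ) ≤ e)]

theorem mk_sum_range_sub_mul (he : 1 ≤ e) (hf : ∀ m < 0, f m = 0) :
    mk (fun n : ℕ => ∑ k ∈ range (n + 1), f (n - k * e)) =
      (1 - X ^ e)⁻¹ * mk (fun n : ℕ => f n) := by
  have hc : constantCoeff (1 - X ^ e : K⟦X⟧) ≠ 0 := by simp [zero_pow (by omega : e ≠ 0)]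
  rw [mul_comm, eq_mul_inv_iff_mul_eq hc]
  ext n
  -- the coefficient of the product telescopes
  have shifted : (if e ≤ n then ∑ k ∈ range (n - e + 1), f ((n - e : ℕ) - k * e) else 0) =
      ∑ k ∈ range (n + 1), f (n - (k + 1 : ℕ) * e) := by
    have hN := fun N =>
      sum_range_sub_mul_eq_of_lt he hf (m := (n : ℤ) - e) (N := N) (N' := n + 1)
    simp only [Nat.cast_add, Nat.cast_one, add_mul, one_mul, ← sub_sub,
      sub_right_comm _ _ (e : ℤ)]
    split_ifs with hen
    · rw [hN (n - e + 1) (by omega) (by omega), Nat.cast_sub hen]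
    · rw [hN 0 (by omega) (Nat.zero_le _), sum_range_zero]
  rw [mul_sub, mul_one, map_sub, coeff_mul_X_pow', coeff_mk, coeff_mk, coeff_mk, shifted,
    ← sum_sub_distrib, sum_range_sub' (fun k => f (n - k * e)),
    hf (n - (n + 1 : ℕ) * e) (by push_cast; nlinarith)]
  simp

end GeneratingFunction

section

variable {d : ℕ}

def weight (d : ℕ) : (Fin d → ℤ) →+ ℤ :=
  AddMonoidHom.mk' (fun v => ∑ i, ((i.val : ℤ) + 1) * v i) fun v w => by
    simp only [Pi.add_apply, mul_add, sum_add_distrib]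

def moment (d : ℕ) : (Fin d → ℤ) →+ ℤ :=
  AddMonoidHom.mk' (fun v => ∑ i, (i.val : ℤ) * v i) fun v w => by
    simp only [Pi.add_apply, mul_add, sum_add_distrib]

theorem weight_apply (v : Fin d → ℤ) : weight d v = ∑ i, ((i.val : ℤ) + 1) * v i := rfl

theorem moment_apply (v : Fin d → ℤ) : moment d v = ∑ i, (i.val : ℤ) * v i := rfl

theorem weight_stdBasis (k : Fin d) : weight d (stdBasis d k) = (k.val : ℤ) + 1 := by
  simp [weight_apply, stdBasis]

theorem moment_stdBasis (k : Fin d) : moment d (stdBasis d k) = (k.val : ℤ) := by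
  simp [moment_apply, stdBasis]

theorem weight_nonneg {v : Fin d → ℤ} (hv : nonneg v) : 0 ≤ weight d v :=
  weight_apply v ▸ sum_nonneg fun i _ => mul_nonneg (by positivity) (hv i)

theorem moment_nonneg {v : Fin d → ℤ} (hv : nonneg v) : 0 ≤ moment d v :=
  moment_apply v ▸ sum_nonneg fun i _ => mul_nonneg (by positivity) (hv i)

theorem nonneg_nE1 (n : ℕ) : nonneg (nE1 d n) := by
  intro i
  unfold nE1
  split_ifs <;> simp

theorem weight_nE1 (hd : 1 ≤ d) (n : ℕ) : weight d (nE1 d n) = n := by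
  rw [weight_apply, sum_eq_single ⟨0, hd⟩] <;> simp +contextual [nE1, Fin.ext_iff]

def weightSlice (d : ℕ) (m : ℤ) : Set (Fin d → ℤ) := {v | nonneg v ∧ weight d v = m}

theorem mem_idealG_iff {v w : Fin d → ℤ} : w ∈ idealG d v ↔ ReflTransGen (covRel d) w v := by
  simp [idealG, precR, reflTransGen_iff_eq_or_transGen, eq_comm]

theorem covRel.weight_eq {v w : Fin d → ℤ} (h : covRel d v w) :
    weight d v = weight d w ∨ weight d v = weight d w - d := by
  obtain ⟨-, -, x, ⟨i, j, k, ⟨q, hq⟩, rfl⟩, rfl⟩ := h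
  simp only [map_add, map_sub, weight_stdBasis]
  have := i.isLt; have := j.isLt; have := k.isLt
  have hq : q = 0 ∨ q = -1 := by
    have : -2 < q ∧ q < 1 := by constructor <;> nlinarith
    omega
  rcases hq with rfl | rfl
  · left; linarith
  · right; linarith

theorem exists_weight_eq_sub_mul {v w : Fin d → ℤ} (h : ReflTransGen (covRel d) v w) :
    ∃ k : ℕ, weight d v = weight d w - k * d := by
  induction h with
  | refl => exact ⟨0, by simp⟩
  | tail _ hbc ih =>
    obtain ⟨k, hk⟩ := ih
    rcases hbc.weight_eq with h | h
    · exact ⟨k, by rw [hk, h]⟩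
    · exact ⟨k + 1, by rw [hk, h]; push_cast; ring⟩

theorem nonneg_of_reflTransGen {v w : Fin d → ℤ} (h : ReflTransGen (covRel d) v w)
    (hw : nonneg w) : nonneg v := by
  rcases h.cases_head with rfl | ⟨_, hvc, _⟩
  exacts [hw, hvc.1]

theorem exists_covRel_split {v : Fin d → ℤ} (hv : nonneg v) {i : Fin d} (hi : i.val ≠ 0)
    (hvi : 0 < v i) :
    ∃ w, covRel d v w ∧ weight d w = weight d v ∧ moment d w = moment d v - 1 := by
  -- `w` trades one unit of `v` at index `i` for one unit each at `i - 1` and `0`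
  let j : Fin d := ⟨i - 1, by omega⟩
  let z : Fin d := ⟨0, by omega⟩
  have hj : (j.val : ℤ) = i.val - 1 := by simp only [j]; omega
  let x := stdBasis d i - stdBasis d j - stdBasis d z
  refine ⟨v - x, ⟨hv, ?_, x, ⟨j, z, i, by simp [hj, z], rfl⟩, (sub_add_cancel v x).symm⟩, ?_, ?_⟩
  · intro l
    have := hv l
    by_cases hl : l = i
    · subst hl
      simp only [x, j, z, Pi.sub_apply, stdBasis, ↓reduceIte, Fin.ext_iff]
      split_ifs <;> omega
    · simp only [x, Pi.sub_apply, stdBasis, hl, ↓reduceIte, zero_sub]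
      split_ifs <;> omega
  · simp [x, weight_stdBasis, hj, z]
  · simp [x, moment_stdBasis, hj, z]

theorem reflTransGen_nE1_weight {v : Fin d → ℤ} (hv : nonneg v) :
    ReflTransGen (covRel d) v (nE1 d (weight d v).toNat) := by
  induction hm : (moment d v).toNat using Nat.strong_induction_on generalizing v with
  | _ t ih =>
  by_cases h : ∃ i : Fin d, i.val ≠ 0 ∧ 0 < v i
  · obtain ⟨i, hi, hvi⟩ := h
    obtain ⟨w, hvw, hw, hmw⟩ := exists_covRel_split hv hi hvi
    have := moment_nonneg hvw.2.1
    rw [← hw]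
    exact .head hvw (ih _ (by omega) hvw.2.1 rfl)
  · push Not at h
    have hsupp : ∀ i : Fin d, i.val ≠ 0 → v i = 0 := fun i hi => le_antisymm (h i hi) (hv i)
    suffices hv' : nE1 d (weight d v).toNat = v by rw [hv']
    funext l
    by_cases hl : l.val = 0
    · have hne : ∀ i ≠ l, i.val ≠ 0 := fun i hil hi => hil (Fin.ext (hi.trans hl.symm))
      rw [weight_apply, sum_eq_single l (fun i _ hil => by rw [hsupp i (hne i hil), mul_zero])
        (by simp)]
      simp [nE1, hl, hv l]
    · simp [nE1, hl, hsupp l hl]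

theorem reflTransGen_nE1_add (hd : 1 ≤ d) (n : ℕ) :
    ReflTransGen (covRel d) (nE1 d n) (nE1 d (n + d)) := by
  let l : Fin d := ⟨d - 1, by omega⟩
  let z : Fin d := ⟨0, hd⟩
  let u := nE1 d n + stdBasis d l
  have hu : nonneg u := fun i =>
    add_nonneg (nonneg_nE1 n i) (by unfold stdBasis; split_ifs <;> simp)
  have hwu : weight d u = ↑(n + d) := by
    simp only [u, l, map_add, weight_nE1 hd, weight_stdBasis, Nat.cast_add]
    omega
  have hcov : covRel d (nE1 d n) u := by
    refine ⟨nonneg_nE1 n, hu, stdBasis d z - stdBasis d l - stdBasis d z, ⟨l, z, z, ?_, rfl⟩, ?_⟩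
    · exact ⟨-1, by simp only [l, z, CharP.cast_eq_zero]; omega⟩
    · simp only [u]; abel
  have := ReflTransGen.head hcov (reflTransGen_nE1_weight hu)
  rwa [hwu, Int.toNat_natCast] at this

theorem reflTransGen_nE1_add_mul (hd : 1 ≤ d) (n k : ℕ) :
    ReflTransGen (covRel d) (nE1 d n) (nE1 d (n + k * d)) := by
  induction k with
  | zero => simp [ReflTransGen.refl]
  | succ k ih => simpa [add_mul, ← add_assoc] using ih.trans (reflTransGen_nE1_add hd _)

theorem idealG_nE1 (hd : 1 ≤ d) (n : ℕ) :
    idealG d (nE1 d n) = ⋃ k ∈ range (n + 1), weightSlice d (n - k * d) := by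
  ext v
  simp only [mem_idealG_iff, Set.mem_iUnion, mem_range, exists_prop, weightSlice,
    Set.mem_ofPred_eq]
  constructor
  · intro h
    obtain ⟨k, hk⟩ := exists_weight_eq_sub_mul h
    have hv := nonneg_of_reflTransGen h (nonneg_nE1 n)
    have := weight_nonneg hv
    rw [weight_nE1 hd] at hk
    refine ⟨k, ?_, hv, hk⟩
    have : (k : ℤ) < n + 1 := by nlinarith [(by exact_mod_cast hd : (1 : ℤ) ≤ d)]
    omega
  · rintro ⟨k, -, hv, hk⟩
    have := weight_nonneg hv
    have hn : (weight d v).toNat + k * d = n := by zify; omega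
    exact (reflTransGen_nE1_weight hv).trans (hn ▸ reflTransGen_nE1_add_mul hd _ k)

theorem weight_snoc (v : Fin d → ℤ) (a : ℤ) :
    weight (d + 1) (Fin.snoc v a) = weight d v + (d + 1) * a := by
  simp [weight_apply, Fin.sum_univ_castSucc]

theorem nonneg_snoc {v : Fin d → ℤ} {a : ℤ} :
    nonneg (Fin.snoc v a : Fin (d + 1) → ℤ) ↔ nonneg v ∧ 0 ≤ a := by
  simp [nonneg, Fin.forall_fin_succ']

theorem weightSlice_succ (d : ℕ) (m : ℤ) :
    weightSlice (d + 1) m = ⋃ k ∈ range (m.toNat + 1),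
      (fun v => (Fin.snoc v (k : ℤ) : Fin (d + 1) → ℤ)) '' weightSlice d (m - k * (d + 1)) := by
  ext v
  obtain ⟨w, a, rfl⟩ : ∃ w a, v = Fin.snoc w a := ⟨_, _, (Fin.snoc_init_self v).symm⟩
  simp only [weightSlice, Set.mem_ofPred_eq, nonneg_snoc, weight_snoc, mem_range,
    Order.lt_add_one_iff, Set.mem_iUnion, Set.mem_image, Fin.snoc_inj, ↓existsAndEq, true_and,
    exists_and_left, exists_prop]
  constructor
  · rintro ⟨⟨hw, ha⟩, hm⟩
    have := weight_nonneg hw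
    refine ⟨a.toNat, ⟨hw, ?_⟩, ?_, Int.toNat_of_nonneg ha⟩
    · rw [Int.toNat_of_nonneg ha]; linarith
    · have : a ≤ m := by nlinarith
      omega
  · rintro ⟨k, ⟨hw, hm⟩, -, rfl⟩
    exact ⟨⟨hw, by positivity⟩, by rw [hm]; ring⟩

theorem weightSlice_finite (d : ℕ) (m : ℤ) : (weightSlice d m).Finite := by
  induction d generalizing m with
  | zero => exact Set.toFinite _
  | succ d ih =>
    rw [weightSlice_succ]
    exact (finite_toSet _).biUnion fun k _ => (ih _).image _

theorem ncard_weightSlice_zero (m : ℤ) : (weightSlice 0 m).ncard = if m = 0 then 1 else 0 := by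
  by_cases hm : m = 0 <;> simp [weightSlice, nonneg, weight_apply, hm, eq_comm]

theorem ncard_weightSlice_succ (d : ℕ) (m : ℤ) :
    (weightSlice (d + 1) m).ncard =
      ∑ k ∈ range (m.toNat + 1), (weightSlice d (m - k * (d + 1))).ncard := by
  rw [weightSlice_succ]
  exact ncard_biUnion_range_snoc (fun _ => weightSlice_finite _ _) (fun _ => injective_id)
    Nat.cast_injective _

def boundedPartitions (d : ℕ) (m : ℤ) : Set (Fin d → ℕ) := {v | Antitone v ∧ ∑ i, (v i : ℤ) = m}

theorem Ppart_eq_ncard (d : ℕ) (m : ℤ) : Ppart d m = (boundedPartitions d m).ncard := rfl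

theorem antitone_snoc {α : Type*} [Preorder α] {q : Fin d → α} {a : α} :
    Antitone (Fin.snoc q a : Fin (d + 1) → α) ↔ Antitone q ∧ ∀ i, a ≤ q i := by
  refine ⟨fun h => ⟨fun i j hij => ?_, fun i => ?_⟩, fun ⟨hq, ha⟩ i j hij => ?_⟩
  · simpa using h (Fin.castSucc_le_castSucc_iff.2 hij)
  · simpa using h (Fin.le_last i.castSucc)
  · induction j using Fin.lastCases with
    | last => induction i using Fin.lastCases <;> simp [ha]
    | cast j =>
      induction i using Fin.lastCases with
      | last => exact absurd hij (by simp)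
      | cast i => simpa using hq (Fin.castSucc_le_castSucc_iff.1 hij)

theorem boundedPartitions_succ (d : ℕ) (m : ℤ) :
    boundedPartitions (d + 1) m = ⋃ k ∈ range (m.toNat + 1),
      (fun q => (Fin.snoc (q + fun _ => k) k : Fin (d + 1) → ℕ)) ''
        boundedPartitions d (m - k * (d + 1)) := by
  ext p
  obtain ⟨q, a, rfl⟩ : ∃ q a, p = Fin.snoc q a := ⟨_, _, (Fin.snoc_init_self p).symm⟩
  simp only [boundedPartitions, Fin.sum_univ_castSucc, Set.mem_ofPred_eq, antitone_snoc,
    Fin.snoc_castSucc, Fin.snoc_last, mem_range, Order.lt_add_one_iff, Set.mem_iUnion,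
    Set.mem_image, Fin.snoc_inj, exists_prop, ↓existsAndEq, and_true, exists_and_left]
  constructor
  · rintro ⟨⟨hq, ha⟩, hm⟩
    have : (0 : ℤ) ≤ ∑ i, (q i : ℤ) := by positivity
    refine ⟨by omega, fun i => q i - a, ⟨fun i j hij => Nat.sub_le_sub_right (hq hij) a, ?_⟩,
      funext fun i => Nat.sub_add_cancel (ha i)⟩
    simp only [Nat.cast_sub (ha _), sum_sub_distrib, sum_const, card_univ, Fintype.card_fin,
      nsmul_eq_mul]
    linarith
  · rintro ⟨-, q, ⟨hq, hm⟩, rfl⟩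
    refine ⟨⟨fun i j hij => Nat.add_le_add_right (hq hij) a, fun i => Nat.le_add_left a _⟩, ?_⟩
    simp only [Pi.add_apply, Nat.cast_add, sum_add_distrib, hm, sum_const, card_univ,
      Fintype.card_fin, nsmul_eq_mul]
    ring

theorem boundedPartitions_finite (d : ℕ) (m : ℤ) : (boundedPartitions d m).Finite := by
  induction d generalizing m with
  | zero => exact Set.toFinite _
  | succ d ih =>
    rw [boundedPartitions_succ]
    exact (finite_toSet _).biUnion fun k _ => (ih _).image _

theorem Ppart_zero (m : ℤ) : Ppart 0 m = if m = 0 then 1 else 0 := by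
  by_cases hm : m = 0 <;>
    simp [Ppart_eq_ncard, boundedPartitions, hm, eq_comm, Subsingleton.antitone]

theorem Ppart_succ (d : ℕ) (m : ℤ) :
    Ppart (d + 1) m = ∑ k ∈ range (m.toNat + 1), Ppart d (m - k * (d + 1)) := by
  simp only [Ppart_eq_ncard, boundedPartitions_succ]
  exact ncard_biUnion_range_snoc (fun _ => boundedPartitions_finite _ _)
    (fun _ => add_left_injective _) injective_id _

theorem Ppart_of_neg {m : ℤ} (hm : m < 0) : Ppart d m = 0 := by
  rw [Ppart_eq_ncard, Set.ncard_eq_zero (boundedPartitions_finite d m)]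
  exact Set.eq_empty_of_forall_notMem fun v hv => hm.not_ge (hv.2 ▸ by positivity)

theorem ncard_weightSlice (d : ℕ) (m : ℤ) : (weightSlice d m).ncard = Ppart d m := by
  induction d generalizing m with
  | zero => rw [ncard_weightSlice_zero, Ppart_zero]
  | succ d ih => simp only [ncard_weightSlice_succ, Ppart_succ, ih]

theorem mk_Ppart_eq_prod (K : Type*) [Field K] (d : ℕ) :
    mk (fun n : ℕ => (Ppart d n : K)) = ∏ i ∈ range d, (1 - X ^ (i + 1))⁻¹ := by
  induction d with
  | zero => ext n; simp [Ppart_zero, coeff_one]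
  | succ d ih =>
    rw [prod_range_succ, ← ih, mul_comm, ← mk_sum_range_sub_mul (f := fun m => (Ppart d m : K))
      (by omega) fun m hm => by simp [Ppart_of_neg hm]]
    simp [Ppart_succ]

theorem Cnum_eq_sum_Ppart (hd : 1 ≤ d) (n : ℕ) :
    Cnum d n = ∑ k ∈ range (n + 1), Ppart d (n - k * d) := by
  rw [Cnum, idealG_nE1 hd, ncard_biUnion_range (fun _ => weightSlice_finite _ _)]
  · simp only [ncard_weightSlice]
  · intro k l hkl
    refine Set.disjoint_left.2 fun v hk hl => hkl ?_
    have := hk.2.symm.trans hl.2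
    exact_mod_cast mul_right_cancel₀ (by positivity : (d : ℤ) ≠ 0)
      (by linarith : (k : ℤ) * d = l * d)

end

open PowerSeries in
theorem stmt19 (d : ℕ) (hd : 1 ≤ d) :
    (∀ n : ℕ, Cnum d n = ∑ k ∈ Finset.range (n + 1), Ppart d ((n : ℤ) - k * d)) ∧
    (PowerSeries.mk (fun n => (Cnum d n : ℚ)) =
      (1 - (X : ℚ⟦X⟧) ^ d)⁻¹ * ∏ i ∈ Finset.range d, (1 - (X : ℚ⟦X⟧) ^ (i + 1))⁻¹) := by
  refine ⟨Cnum_eq_sum_Ppart hd, ?_⟩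
  rw [← mk_Ppart_eq_prod, ← mk_sum_range_sub_mul (f := fun m => (Ppart d m : ℚ)) hd
    fun m hm => by simp [Ppart_of_neg hm]]
  simp [Cnum_eq_sum_Ppart hd]
end
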